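/- Suppose α R² ≥ ln 2, i.e. exp(-α R²) ≤ 1/2. Then for every 0 < c < 1 and every r ≥ 0, f(r) ≤ exp(-(c/4)·exp(-α R²)) · f((1+c)r), where f(r) = ∫₀^r ψ(s)g(s) ds. -/

import Mathlib

open Real MeasureTheory intervalIntegral

/-- The auxiliary function ψ(r) = exp(-α·min{r², R²}). -/
noncomputable def psiE (α R r : ℝ) : ℝ := Real.exp (-(α * min (r ^ 2) (R ^ 2)))

/-- Ψ(r) = ∫₀ʳ ψ(s) ds. -/
noncomputable def PsiE (α R r : ℝ) : ℝ := ∫ s in (0:ℝ)..r, psiE α R s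

/-- g(r) = 1 - (1/2)·(∫₀^{min{r,R}} Ψ/ψ)/(∫₀^R Ψ/ψ). -/
noncomputable def gEb (α R r : ℝ) : ℝ :=
  1 - (1 / 2) * (∫ s in (0:ℝ)..(min r R), PsiE α R s / psiE α R s) /
      (∫ s in (0:ℝ)..R, PsiE α R s / psiE α R s)

/-- The Eberle distance function f(r) = ∫₀ʳ ψ(s)·g(s) ds. -/
noncomputable def fEb (α R r : ℝ) : ℝ := ∫ s in (0:ℝ)..r, psiE α R s * gEb α R s

/-!
Since `g` takes values in `[1/2, 1]` and `exp(-αR²) ≤ ψ ≤ 1`, the integrand `ψ g` of `f` lies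
between `E/2` and `1`, where `E = exp(-αR²)`. Hence `f(r) ≤ r`, while on `[r, (1+c)r]` the function
`f` gains at least `(E/2)·cr ≥ (cE/2)·f(r)`. As `cE ≤ 2`, `(1 - cE/4)(1 + cE/2) ≥ 1`, so
`f(r) ≤ (1 - cE/4)·f((1+c)r)`, and `1 - x ≤ exp(-x)` finishes.
-/

theorem le_exp_mul_of_add_le {a b c E r : ℝ} (ha : 0 ≤ a) (har : a ≤ r) (hcE₀ : 0 ≤ c * E)
    (hcE : c * E ≤ 2) (hab : a + E / 2 * (c * r) ≤ b) :
    a ≤ exp (-(c / 4) * E) * b := by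
  have hb : 0 ≤ b := by nlinarith
  have hk : 0 ≤ 1 - c / 4 * E := by linarith
  calc a ≤ (1 - c / 4 * E) * b := by
        nlinarith [mul_le_mul_of_nonneg_left hab hk, mul_le_mul_of_nonneg_left har hcE₀,
          mul_nonneg (mul_nonneg hcE₀ (ha.trans har)) (sub_nonneg.2 hcE)]
    _ ≤ exp (-(c / 4) * E) * b := by
      gcongr
      linarith [add_one_le_exp (-(c / 4) * E)]

section Eberle

variable (α R : ℝ)

theorem continuous_psiE : Continuous (psiE α R) := by
  unfold psiE
  fun_prop

theorem psiE_le_one (hα : 0 ≤ α) (r : ℝ) : psiE α R r ≤ 1 := by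
  rw [psiE, exp_le_one_iff, neg_nonpos]
  have : 0 ≤ min (r ^ 2) (R ^ 2) := le_min (sq_nonneg r) (sq_nonneg R)
  positivity

theorem exp_le_psiE (hα : 0 ≤ α) (r : ℝ) : exp (-(α * R ^ 2)) ≤ psiE α R r := by
  rw [psiE, exp_le_exp, neg_le_neg_iff]
  exact mul_le_mul_of_nonneg_left (min_le_right _ _) hα

theorem continuous_PsiE : Continuous (PsiE α R) :=
  continuous_primitive (fun a b ↦ (continuous_psiE α R).intervalIntegrable a b) 0

theorem PsiE_nonneg {r : ℝ} (hr : 0 ≤ r) : 0 ≤ PsiE α R r :=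
  integral_nonneg hr fun _ _ ↦ (exp_pos _).le

theorem continuous_PsiE_div_psiE : Continuous fun s ↦ PsiE α R s / psiE α R s :=
  (continuous_PsiE α R).div (continuous_psiE α R) fun _ ↦ (exp_pos _).ne'

theorem gEb_ratio_mem_Icc {s : ℝ} (hs : 0 ≤ s) :
    (∫ t in (0:ℝ)..(min s R), PsiE α R t / psiE α R t) /
      (∫ t in (0:ℝ)..R, PsiE α R t / psiE α R t) ∈ Set.Icc 0 1 := by
  rcases le_or_gt R 0 with hR | hR
  · -- the ratio is `D / D`, which is `1`, or `0` when `D = 0`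
    rw [min_eq_right (hR.trans hs)]
    refine ⟨?_, div_self_le_one _⟩
    rcases eq_or_ne (∫ t in (0:ℝ)..R, PsiE α R t / psiE α R t) 0 with hD | hD <;> simp [hD]
  · have hQ : ∀ t ∈ Set.Icc 0 R, 0 ≤ PsiE α R t / psiE α R t :=
      fun t ht ↦ div_nonneg (PsiE_nonneg α R ht.1) (exp_pos _).le
    have hsR : 0 ≤ min s R := le_min hs hR.le
    have hN : 0 ≤ ∫ t in (0:ℝ)..(min s R), PsiE α R t / psiE α R t :=
      integral_nonneg hsR fun t ht ↦ hQ t ⟨ht.1, ht.2.trans (min_le_right s R)⟩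
    have hND : ∫ t in (0:ℝ)..(min s R), PsiE α R t / psiE α R t ≤
        ∫ t in (0:ℝ)..R, PsiE α R t / psiE α R t := by
      refine integral_mono_interval le_rfl hsR (min_le_right s R) ?_
        ((continuous_PsiE_div_psiE α R).intervalIntegrable 0 R)
      filter_upwards [ae_restrict_mem measurableSet_Ioc] with t ht
      exact hQ t (Set.Ioc_subset_Icc_self ht)
    exact ⟨div_nonneg hN (hN.trans hND), div_le_one_of_le₀ hND (hN.trans hND)⟩

theorem gEb_mem_Icc {s : ℝ} (hs : 0 ≤ s) : gEb α R s ∈ Set.Icc (1 / 2) 1 := by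
  obtain ⟨h₀, h₁⟩ := gEb_ratio_mem_Icc α R hs
  rw [gEb, mul_div_assoc]
  constructor <;> linarith

theorem continuous_gEb : Continuous (gEb α R) := by
  have : Continuous fun r ↦ ∫ t in (0:ℝ)..(min r R), PsiE α R t / psiE α R t :=
    (continuous_primitive (fun a b ↦ (continuous_PsiE_div_psiE α R).intervalIntegrable a b) 0).comp
      (continuous_id.min continuous_const)
  unfold gEb
  fun_prop

theorem intervalIntegrable_psiE_mul_gEb (a b : ℝ) :
    IntervalIntegrable (fun s ↦ psiE α R s * gEb α R s) volume a b :=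
  ((continuous_psiE α R).mul (continuous_gEb α R)).intervalIntegrable a b

theorem fEb_nonneg {r : ℝ} (hr : 0 ≤ r) : 0 ≤ fEb α R r :=
  integral_nonneg hr fun s hs ↦
    mul_nonneg (exp_pos _).le (by linarith [(gEb_mem_Icc α R hs.1).1])

theorem fEb_le_self (hα : 0 ≤ α) {r : ℝ} (hr : 0 ≤ r) : fEb α R r ≤ r := by
  have hle : ∀ s ∈ Set.Icc 0 r, psiE α R s * gEb α R s ≤ 1 := fun s hs ↦
    mul_le_one₀ (psiE_le_one α R hα s) (by linarith [(gEb_mem_Icc α R hs.1).1])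
      (gEb_mem_Icc α R hs.1).2
  simpa [fEb] using integral_mono_on hr (intervalIntegrable_psiE_mul_gEb α R 0 r)
    intervalIntegrable_const hle

theorem mul_sub_le_fEb_sub (hα : 0 ≤ α) {r t : ℝ} (hr : 0 ≤ r) (hrt : r ≤ t) :
    exp (-(α * R ^ 2)) / 2 * (t - r) ≤ fEb α R t - fEb α R r := by
  have hge : ∀ s ∈ Set.Icc r t, exp (-(α * R ^ 2)) / 2 ≤ psiE α R s * gEb α R s := by
    intro s hs
    have hg := (gEb_mem_Icc α R (hr.trans hs.1)).1
    have hψ := exp_le_psiE α R hα s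
    nlinarith [exp_pos (-(α * R ^ 2))]
  rw [fEb, fEb, integral_interval_sub_left (intervalIntegrable_psiE_mul_gEb α R 0 t)
    (intervalIntegrable_psiE_mul_gEb α R 0 r)]
  have := integral_mono_on hrt intervalIntegrable_const
    (intervalIntegrable_psiE_mul_gEb α R r t) hge
  rwa [intervalIntegral.integral_const, smul_eq_mul, mul_comm] at this

end Eberle

theorem f_multiplicative_contraction_general (α R : ℝ) (hα : 0 < α) :
    ∀ c : ℝ, 0 < c → c < 1 → ∀ r : ℝ, 0 ≤ r →
      fEb α R r ≤ Real.exp (-(c / 4) * Real.exp (-(α * R ^ 2))) * fEb α R ((1 + c) * r) := by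
  intro c hc hc1 r hr
  have hE₀ := exp_pos (-(α * R ^ 2))
  have hE₁ : exp (-(α * R ^ 2)) ≤ 1 := exp_le_one_iff.2 (by nlinarith [sq_nonneg R])
  have hgain := mul_sub_le_fEb_sub α R hα.le hr (t := (1 + c) * r) (by nlinarith)
  refine le_exp_mul_of_add_le (fEb_nonneg α R hr) (fEb_le_self α R hα.le hr) (by positivity)
    (by nlinarith) ?_
  linarith [show (1 + c) * r - r = c * r by ring]

/-- If exp(-αR²) ≤ 1/2 then f(r) ≤ exp(-(c/4)·exp(-αR²))·f((1+c)r) for 0 < c < 1, r ≥ 0. -/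
theorem f_multiplicative_contraction (α R : ℝ) (hα : 0 < α) (hR : 0 < R)
    (hsmall : Real.exp (-(α * R ^ 2)) ≤ 1 / 2) :
    ∀ c : ℝ, 0 < c → c < 1 → ∀ r : ℝ, 0 ≤ r →
      fEb α R r ≤ Real.exp (-(c / 4) * Real.exp (-(α * R ^ 2))) * fEb α R ((1 + c) * r) :=
  f_multiplicative_contraction_general α R hα
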